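/- Let n ≥ 1 and let x, y : {1,…,n} → {0,1}. The graph SC(x,y) is connected if and only if for every index 1 ≤ i ≤ n, x_i = 0 or y_i = 0. -/

import Mathlib

/-- Vertices of the `Simple AL-Conn` construction: `a`, `b`, and `l i`, `r i` for
`i ∈ {1, …, n+1}` (encoded as `Fin (n+1)`; index `n+1` is `Fin.last n`). -/
inductive SCVert (n : ℕ) : Type
  | a : SCVert n
  | b : SCVert n
  | l : Fin (n + 1) → SCVert n
  | r : Fin (n + 1) → SCVert n

/-- Edges of `SC(x, y)`: `l i ~ r i` for all `i`; `a ~ l_{n+1}`; `b ~ r_{n+1}`;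
for `i ∈ {1, …, n}`: `a ~ l i` iff `x i = 0` and `b ~ r i` iff `y i = 0`;
no other edges. -/
def scRel {n : ℕ} (x y : Fin n → Fin 2) : SCVert n → SCVert n → Prop
  | .l i, .r j => i = j
  | .a, .l j => j = Fin.last n ∨ ∃ i : Fin n, j = i.castSucc ∧ x i = 0
  | .b, .r j => j = Fin.last n ∨ ∃ i : Fin n, j = i.castSucc ∧ y i = 0
  | _, _ => False

/-- The `Simple AL-Conn` graph. -/
def SCGraph {n : ℕ} (x y : Fin n → Fin 2) : SimpleGraph (SCVert n) :=
  SimpleGraph.fromRel (scRel x y)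

lemma adj_al {n : ℕ} (x y : Fin n → Fin 2) (j : Fin (n+1))
    (h : j = Fin.last n ∨ ∃ i : Fin n, j = i.castSucc ∧ x i = 0) :
    (SCGraph x y).Adj .a (.l j) := by
  rw [SCGraph, SimpleGraph.fromRel_adj]
  exact ⟨by simp, Or.inl h⟩

lemma adj_br {n : ℕ} (x y : Fin n → Fin 2) (j : Fin (n+1))
    (h : j = Fin.last n ∨ ∃ i : Fin n, j = i.castSucc ∧ y i = 0) :
    (SCGraph x y).Adj .b (.r j) := by
  rw [SCGraph, SimpleGraph.fromRel_adj]
  exact ⟨by simp, Or.inl h⟩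

lemma adj_lr {n : ℕ} (x y : Fin n → Fin 2) (j : Fin (n+1)) :
    (SCGraph x y).Adj (.l j) (.r j) := by
  rw [SCGraph, SimpleGraph.fromRel_adj]
  exact ⟨by simp, Or.inl rfl⟩

lemma reach_a {n : ℕ} (x y : Fin n → Fin 2)
    (h : ∀ i : Fin n, x i = 0 ∨ y i = 0) (v : SCVert n) :
    (SCGraph x y).Reachable .a v := by
  have hb : (SCGraph x y).Reachable .a .b :=
    ((adj_al x y _ (Or.inl rfl)).reachable.trans
      (adj_lr x y (Fin.last n)).reachable).trans (adj_br x y _ (Or.inl rfl)).reachable.symm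
  have hl : ∀ j : Fin (n+1), (SCGraph x y).Reachable .a (.l j) := by
    intro j
    rcases Fin.eq_castSucc_or_eq_last j with ⟨i, rfl⟩ | rfl
    · rcases h i with hx | hy
      · exact (adj_al x y _ (Or.inr ⟨i, rfl, hx⟩)).reachable
      · exact (hb.trans (adj_br x y _ (Or.inr ⟨i, rfl, hy⟩)).reachable).trans
          (adj_lr x y _).reachable.symm
    · exact (adj_al x y _ (Or.inl rfl)).reachable
  cases v with
  | a => exact SimpleGraph.Reachable.refl _
  | b => exact hb
  | l j => exact hl j
  | r j => exact (hl j).trans (adj_lr x y j).reachable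

theorem stmt_12 {n : ℕ} (hn : 1 ≤ n) (x y : Fin n → Fin 2) :
    (SCGraph x y).Connected ↔ ∀ i : Fin n, x i = 0 ∨ y i = 0 := by
  constructor
  · intro hc
    by_contra hno
    push_neg at hno
    obtain ⟨i, hx, hy⟩ := hno
    set c := i.castSucc with hc'
    -- the set {l c, r c} is closed under adjacency
    have closed : ∀ u v : SCVert n,
        (u = .l c ∨ u = .r c) → (SCGraph x y).Adj u v → (v = .l c ∨ v = .r c) := by
      intro u v hu hadj
      rw [SCGraph, SimpleGraph.fromRel_adj] at hadj
      obtain ⟨hne, h | h⟩ := hadj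
      · rcases hu with rfl | rfl
        · cases v with
          | a => exact absurd h (by simp [scRel])
          | b => exact absurd h (by simp [scRel])
          | l j => exact absurd h (by simp [scRel])
          | r j => simp only [scRel] at h; exact Or.inr (by rw [h])
        · cases v <;> simp [scRel] at h
      · rcases hu with rfl | rfl
        · cases v with
          | a =>
            simp only [scRel] at h
            rcases h with h | ⟨k, hk, hxk⟩
            · exact absurd h (Fin.castSucc_lt_last i).ne
            · exact absurd hxk (by rw [← Fin.castSucc_injective _ (hc'.symm.trans hk)]; exact hx)
          | b => exact absurd h (by simp [scRel])
          | l j => exact absurd h (by simp [scRel])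
          | r j => exact absurd h (by simp [scRel])
        · cases v with
          | a => exact absurd h (by simp [scRel])
          | b =>
            simp only [scRel] at h
            rcases h with h | ⟨k, hk, hyk⟩
            · exact absurd h (Fin.castSucc_lt_last i).ne
            · exact absurd hyk (by rw [← Fin.castSucc_injective _ (hc'.symm.trans hk)]; exact hy)
          | l j => simp only [scRel] at h; exact Or.inl (by rw [h])
          | r j => exact absurd h (by simp [scRel])
    have key : ∀ (u v : SCVert n), (SCGraph x y).Walk u v →
        (u = .l c ∨ u = .r c) → (v = .l c ∨ v = .r c) := by
      intro u v p
      induction p with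
      | nil => exact id
      | cons hadj _ ih => exact fun hu => ih (closed _ _ hu hadj)
    obtain ⟨p⟩ := hc.preconnected (.l c) .a
    rcases key _ _ p (Or.inl rfl) with h | h <;> exact nomatch h
  · intro h
    rw [SimpleGraph.connected_iff]
    exact ⟨fun u v => ((reach_a x y h u).symm.trans (reach_a x y h v)), ⟨.a⟩⟩
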